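/- Let m ∈ (0,1), κ ≥ 1, θ > 0, α ∈ (0,1], q ≥ 2, and let ψ : ℝ → ℝ be a smooth nonnegative function supported in [1/2, 2] with ∫ψ > 0. For λ > 1 define f_λ ∈ L²(ℝ) by its Fourier transform f̂_λ(ξ) = e^{i(2^{−κ} θ ξ − (1/2)|ξ|^m)} λ^{−1} ψ(λ^{−1} ξ). Then there exist c > 0 and λ₀ > 1 such that for all λ ≥ λ₀: (∫_0^1 (sup_{t∈(0,1)} |u_{f_λ}(x − θ t^κ, t)|)^q |x|^{α−1} dx)^{1/q} ≥ c λ^{−mα/q}, and moreover for every s ∈ ℝ there is a constant C_s with ‖f_λ‖_{H^s} ≤ C_s λ^{s − 1/2} for all λ > 1. -/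

import Mathlib

open MeasureTheory Filter Set
open scoped ENNReal NNReal

/-- Fourier transform `f̂(ξ) = ∫ e^{-ixξ} f(x) dx`. -/
noncomputable def FT (f : ℝ → ℂ) (ξ : ℝ) : ℂ :=
  ∫ x : ℝ, Complex.exp (-(Complex.I * (x : ℂ) * (ξ : ℂ))) * f x

/-- Sobolev norm `‖f‖_{H^s} = (∫ (1+ξ²)^s |f̂(ξ)|² dξ)^{1/2}` (as an extended nonnegative real). -/
noncomputable def HsNorm (s : ℝ) (f : ℝ → ℂ) : ℝ≥0∞ :=
  (∫⁻ ξ : ℝ, ENNReal.ofReal ((1 + ξ ^ 2) ^ s) * (‖FT f ξ‖₊ : ℝ≥0∞) ^ 2) ^ (1/2 : ℝ)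

/-- Truncated fractional Schrödinger wave
`S_R f(y,t) = (2π)⁻¹ ∫_{|ξ|≤R} e^{i(yξ + t|ξ|^m)} f̂(ξ) dξ`. -/
noncomputable def SR (m : ℝ) (f : ℝ → ℂ) (R y t : ℝ) : ℂ :=
  ((2 * Real.pi)⁻¹ : ℝ) *
    ∫ ξ in Set.Icc (-R) R, Complex.exp (Complex.I * ((y * ξ + t * |ξ| ^ m : ℝ) : ℂ)) * FT f ξ

/-- Fractional Schrödinger evolution
`u_f(y,t) = e^{it(−Δ)^{m/2}}f(y) = (2π)⁻¹ ∫ e^{i(yξ + t|ξ|^m)} f̂(ξ) dξ`. -/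
noncomputable def uF (m : ℝ) (f : ℝ → ℂ) (y t : ℝ) : ℂ :=
  ((2 * Real.pi)⁻¹ : ℝ) *
    ∫ ξ : ℝ, Complex.exp (Complex.I * ((y * ξ + t * |ξ| ^ m : ℝ) : ℂ)) * FT f ξ

lemma aux_norm_exp_I (r : ℝ) : ‖Complex.exp (Complex.I * (r : ℂ))‖ = 1 := by
  simp [Complex.norm_exp, mul_comm Complex.I]

lemma aux_re (r a : ℝ) :
    (Complex.exp (Complex.I * (r : ℂ)) * ((a : ℝ) : ℂ)).re = Real.cos r * a := by
  rw [mul_comm Complex.I]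
  simp [Complex.mul_re, Complex.exp_ofReal_mul_I_re, Complex.exp_ofReal_mul_I_im]

lemma aux_integrable {g : ℝ → ℝ} (hg : Continuous g) (hcs : HasCompactSupport g)
    {φ : ℝ → ℝ} (hφ : Continuous φ) :
    Integrable (fun ξ : ℝ => Complex.exp (Complex.I * (φ ξ : ℂ)) * ((g ξ : ℝ) : ℂ)) := by
  refine Integrable.bdd_mul (c := 1) ?_ ?_ (ae_of_all _ fun ξ => le_of_eq (aux_norm_exp_I (φ ξ)))
  · exact (Complex.continuous_ofReal.comp hg).integrable_of_hasCompactSupport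
      (hcs.comp_left (g := fun r : ℝ => (r : ℂ)) rfl)
  · exact (Complex.continuous_exp.comp
      (continuous_const.mul (Complex.continuous_ofReal.comp hφ))).aestronglyMeasurable

lemma aux_mem {ψ : ℝ → ℝ} (hsupp : Function.support ψ ⊆ Set.Icc (1/2 : ℝ) 2)
    {lam : ℝ} (hlam : 0 < lam) {ξ : ℝ} (hne : ψ (lam⁻¹ * ξ) ≠ 0) :
    ξ ∈ Set.Icc (lam / 2) (2 * lam) := by
  have h := hsupp (Function.mem_support.2 hne)
  rw [Set.mem_Icc] at h ⊢
  obtain ⟨h1, h2⟩ := h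
  have hinv : lam * (lam⁻¹ * ξ) = ξ := by field_simp
  constructor <;> nlinarith

lemma weight_bound {s lam ξ : ℝ} (hlam : 1 < lam) (h1 : lam / 2 ≤ ξ) (h2 : ξ ≤ 2 * lam) :
    (1 + ξ ^ 2) ^ s ≤ 5 ^ |s| * lam ^ (2 * s) := by
  have hl0 : 0 < lam := by linarith
  have hξ0 : 0 < ξ := by linarith
  have hsq : (lam ^ (2:ℕ) : ℝ) = lam ^ ((2:ℝ)) := by
    rw [← Real.rpow_natCast lam 2]; norm_num
  rcases le_or_gt 0 s with hs | hs
  · rw [abs_of_nonneg hs]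
    have h5 : 1 + ξ ^ 2 ≤ 5 * lam ^ 2 := by nlinarith
    calc (1 + ξ ^ 2) ^ s ≤ (5 * lam ^ 2) ^ s := Real.rpow_le_rpow (by positivity) h5 hs
      _ = 5 ^ s * lam ^ (2 * s) := by
          rw [Real.mul_rpow (by norm_num) (by positivity), hsq, ← Real.rpow_mul hl0.le]
  · rw [abs_of_neg hs]
    have h5 : lam ^ 2 / 5 ≤ 1 + ξ ^ 2 := by nlinarith
    calc (1 + ξ ^ 2) ^ s ≤ (lam ^ 2 / 5) ^ s :=
        Real.rpow_le_rpow_of_nonpos (by positivity) h5 hs.le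
      _ = 5 ^ (-s) * lam ^ (2 * s) := by
          rw [div_eq_mul_inv, Real.mul_rpow (by positivity) (by norm_num),
            Real.inv_rpow (by norm_num), ← Real.rpow_neg (by norm_num), hsq,
            ← Real.rpow_mul hl0.le]
          ring_nf

lemma core (m κ θ : ℝ) (hm : 0 < m) (hκ : 1 ≤ κ) (hθ : 0 < θ)
    (ψ : ℝ → ℝ) (hψc : Continuous ψ) (hψ0 : ∀ x : ℝ, 0 ≤ ψ x)
    (hsupp : Function.support ψ ⊆ Set.Icc (1/2 : ℝ) 2)
    (lam : ℝ) (hlam : 1 < lam) (f : ℝ → ℂ)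
    (hFT : ∀ ξ : ℝ, FT f ξ =
        Complex.exp (Complex.I *
            (((2:ℝ) ^ (-κ) * θ * ξ - (1/2) * |ξ| ^ m : ℝ) : ℂ)) *
          ((lam⁻¹ * ψ (lam⁻¹ * ξ) : ℝ) : ℂ))
    (x : ℝ) (hx0 : 0 < x) (hxs : x < θ / 4)
    (hxτ : 2 ^ (κ-1) * (x / θ) * (2 * lam) ^ m ≤ 1) :
    ∃ t ∈ Set.Ioo (0:ℝ) 1,
      (∫ y : ℝ, ψ y) / (4 * Real.pi) ≤ ‖uF m f (x - θ * t ^ κ) t‖ := by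
  have hκ0 : (0:ℝ) < κ := by linarith
  have hlam0 : (0:ℝ) < lam := by linarith
  set b : ℝ := 2 ^ (-κ) + x / θ with hb
  have hb0 : 0 < b := by
    have : (0:ℝ) < 2 ^ (-κ) := Real.rpow_pos_of_pos two_pos _
    have : 0 < x / θ := div_pos hx0 hθ
    positivity
  set t : ℝ := b ^ κ⁻¹ with htdef
  have ht0 : 0 < t := Real.rpow_pos_of_pos hb0 _
  have htκ : t ^ κ = b := by
    rw [htdef, ← Real.rpow_mul hb0.le, inv_mul_cancel₀ hκ0.ne', Real.rpow_one]
  have h2κ : (2:ℝ) ^ (-κ) ≤ 1/2 := by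
    have := Real.rpow_le_rpow_of_exponent_le (x := 2) one_le_two (by linarith : -κ ≤ -1)
    simpa [Real.rpow_neg_one] using this
  have hb1 : b < 1 := by
    have : x / θ < 1/4 := by rw [div_lt_iff₀ hθ]; linarith
    simp only [hb]; linarith
  have ht1 : t < 1 := Real.rpow_lt_one hb0.le hb1 (by positivity)
  have hhalf : (1/2 : ℝ) ≤ t := by
    have h1 : ((2:ℝ) ^ (-κ)) ^ κ⁻¹ = 1/2 := by
      rw [← Real.rpow_mul (by norm_num : (0:ℝ) ≤ 2), neg_mul,
        mul_inv_cancel₀ hκ0.ne', Real.rpow_neg_one]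
      norm_num
    calc (1/2 : ℝ) = ((2:ℝ) ^ (-κ)) ^ κ⁻¹ := h1.symm
      _ ≤ b ^ κ⁻¹ := by
          apply Real.rpow_le_rpow (by positivity) _ (by positivity)
          simp only [hb]
          have : 0 < x / θ := div_pos hx0 hθ
          linarith
  set τ : ℝ := t - 1/2 with hτdef
  have hτ0 : 0 ≤ τ := by simp only [hτdef]; linarith
  have hτle : τ ≤ 2 ^ (κ-1) * (x / θ) := by
    have hB := one_add_mul_self_le_rpow_one_add
      (s := 2*t - 1) (by linarith) hκ
    have h2t : (1 + (2*t - 1) : ℝ) = 2 * t := by ring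
    rw [h2t, Real.mul_rpow (by norm_num) ht0.le, htκ] at hB
    have hA0 : (0:ℝ) < 2 ^ κ := Real.rpow_pos_of_pos two_pos _
    have hAinv : (2:ℝ) ^ (-κ) = ((2:ℝ) ^ κ)⁻¹ := Real.rpow_neg (by norm_num) _
    have hA2 : (2:ℝ) ^ (κ-1) = 2 ^ κ / 2 := by
      rw [Real.rpow_sub two_pos, Real.rpow_one]
    have hBb : 1 + κ * (2*t-1) ≤ 1 + 2 ^ κ * (x/θ) := by
      have : (2:ℝ) ^ κ * b = 1 + 2 ^ κ * (x/θ) := by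
        simp only [hb, mul_add, hAinv]
        rw [mul_inv_cancel₀ hA0.ne']
      linarith [hB.trans_eq this]
    have hκτ : 2 * τ ≤ κ * (2*t-1) := by
      have h2τ : 2 * τ = 2*t - 1 := by simp only [hτdef]; ring
      nlinarith
    rw [hA2]
    have hxθ0 : 0 ≤ x / θ := (div_pos hx0 hθ).le
    nlinarith
  clear_value τ t b
  refine ⟨t, ⟨ht0, ht1⟩, ?_⟩
  have hy : x - θ * t ^ κ = -((2:ℝ) ^ (-κ) * θ) := by
    rw [htκ]; simp only [hb]; field_simp; ring
  set g : ℝ → ℝ := fun ξ => lam⁻¹ * ψ (lam⁻¹ * ξ) with hg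
  have hgc : Continuous g := continuous_const.mul (hψc.comp (continuous_const.mul continuous_id))
  have hg0 : ∀ ξ, 0 ≤ g ξ := fun ξ => mul_nonneg (by positivity) (hψ0 _)
  have hmem : ∀ ξ : ℝ, ψ (lam⁻¹ * ξ) ≠ 0 → ξ ∈ Set.Icc (lam/2) (2*lam) :=
    fun ξ hne => aux_mem hsupp hlam0 hne
  have hgcs : HasCompactSupport g := by
    apply HasCompactSupport.intro (isCompact_Icc (a := lam/2) (b := 2*lam))
    intro ξ hξ
    by_contra hne
    have : ψ (lam⁻¹ * ξ) ≠ 0 := by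
      intro h0; apply hne; simp only [hg, h0, mul_zero]
    exact hξ (hmem ξ this)
  have hφc : Continuous fun ξ : ℝ => τ * |ξ| ^ m :=
    continuous_const.mul (continuous_abs.rpow_const fun x => Or.inr hm.le)
  have hcongr : ∀ ξ : ℝ,
      Complex.exp (Complex.I * (((x - θ * t ^ κ) * ξ + t * |ξ| ^ m : ℝ) : ℂ)) * FT f ξ
        = Complex.exp (Complex.I * ((τ * |ξ| ^ m : ℝ) : ℂ)) * ((g ξ : ℝ) : ℂ) := by
    intro ξ
    have hreal : ((x - θ * t ^ κ) * ξ + t * |ξ| ^ m)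
        + (2 ^ (-κ) * θ * ξ - 1/2 * |ξ| ^ m) = τ * |ξ| ^ m := by
      rw [hy, hτdef]; ring
    rw [hFT ξ, ← mul_assoc, ← Complex.exp_add, ← mul_add, ← Complex.ofReal_add, hreal]
  have hint : Integrable (fun ξ : ℝ =>
      Complex.exp (Complex.I * ((τ * |ξ| ^ m : ℝ) : ℂ)) * ((g ξ : ℝ) : ℂ)) :=
    aux_integrable hgc hgcs hφc
  have hre : (uF m f (x - θ * t ^ κ) t).re
      = (2 * Real.pi)⁻¹ * ∫ ξ : ℝ, Real.cos (τ * |ξ| ^ m) * g ξ := by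
    rw [uF]
    rw [integral_congr_ae (ae_of_all _ hcongr)]
    rw [show ∀ z : ℂ, (((2 * Real.pi)⁻¹ : ℝ) * z).re = (2 * Real.pi)⁻¹ * z.re by
      intro z; simp [Complex.mul_re]]
    congr 1
    have h := integral_re hint
    simp only [RCLike.re_to_complex] at h
    rw [← h]
    exact integral_congr_ae (ae_of_all _ fun ξ => aux_re _ _)
  have hcos : ∀ ξ : ℝ, (1/2) * g ξ ≤ Real.cos (τ * |ξ| ^ m) * g ξ := by
    intro ξ
    by_cases h0 : ψ (lam⁻¹ * ξ) = 0
    · simp [hg, h0]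
    · obtain ⟨h1, h2⟩ := Set.mem_Icc.1 (hmem ξ h0)
      have hξ0 : 0 < ξ := by nlinarith
      have habs : |ξ| = ξ := abs_of_pos hξ0
      have hrle : |ξ| ^ m ≤ (2 * lam) ^ m := by
        rw [habs]; exact Real.rpow_le_rpow hξ0.le h2 hm.le
      have hr0 : (0:ℝ) ≤ |ξ| ^ m := Real.rpow_nonneg (abs_nonneg _) _
      have hτξ : τ * |ξ| ^ m ≤ 1 := by
        calc τ * |ξ| ^ m ≤ (2 ^ (κ-1) * (x/θ)) * (2 * lam) ^ m :=
              mul_le_mul hτle hrle hr0 (by positivity)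
          _ ≤ 1 := by rw [mul_assoc] at hxτ ⊢; exact hxτ
      have hτξ0 : 0 ≤ τ * |ξ| ^ m := mul_nonneg hτ0 hr0
      have : (1/2 : ℝ) ≤ Real.cos (τ * |ξ| ^ m) := by
        have h1 := Real.one_sub_sq_div_two_le_cos (x := τ * |ξ| ^ m)
        have h2 : (τ * |ξ| ^ m) ^ 2 ≤ 1 := by
          rw [sq]
          calc τ * |ξ| ^ m * (τ * |ξ| ^ m) ≤ 1 * 1 :=
            mul_le_mul hτξ hτξ hτξ0 zero_le_one
          _ = 1 := one_mul 1
        linarith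
      exact mul_le_mul_of_nonneg_right this (hg0 ξ)
  have hgint : Integrable g := hgc.integrable_of_hasCompactSupport hgcs
  have hgval : ∫ ξ : ℝ, g ξ = ∫ y : ℝ, ψ y := by
    have h1 : ∫ ξ : ℝ, ψ (lam⁻¹ * ξ) = |lam| • ∫ y : ℝ, ψ y :=
      Measure.integral_comp_inv_mul_left ψ lam
    simp only [hg]
    rw [integral_const_mul, h1, abs_of_pos hlam0, smul_eq_mul, ← mul_assoc,
      inv_mul_cancel₀ hlam0.ne', one_mul]
  have hcosint : Integrable (fun ξ : ℝ => Real.cos (τ * |ξ| ^ m) * g ξ) := by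
    refine Integrable.bdd_mul (c := 1) hgint ?_ (ae_of_all _ fun ξ => ?_)
    · exact (Real.continuous_cos.comp hφc).aestronglyMeasurable
    · simpa [Real.norm_eq_abs] using Real.abs_cos_le_one _
  have hmono : (1/2) * (∫ y : ℝ, ψ y) ≤ ∫ ξ : ℝ, Real.cos (τ * |ξ| ^ m) * g ξ := by
    rw [← hgval, ← integral_const_mul]
    exact integral_mono (hgint.const_mul _) hcosint hcos
  have hπ : (0:ℝ) < (2 * Real.pi)⁻¹ := by positivity
  have hfinal : (∫ y : ℝ, ψ y) / (4 * Real.pi) ≤ (uF m f (x - θ * t ^ κ) t).re := by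
    rw [hre]
    have hψint : 0 ≤ ∫ y : ℝ, ψ y := integral_nonneg hψ0
    calc (∫ y : ℝ, ψ y) / (4 * Real.pi)
        = (2 * Real.pi)⁻¹ * ((1/2) * ∫ y : ℝ, ψ y) := by
          rw [div_eq_mul_inv, mul_comm ((2 * Real.pi)⁻¹)]
          rw [show ((4:ℝ) * Real.pi)⁻¹ = (1/2) * (2*Real.pi)⁻¹ by
            rw [mul_inv, mul_inv]; norm_num; ring]
          ring
      _ ≤ (2 * Real.pi)⁻¹ * ∫ ξ : ℝ, Real.cos (τ * |ξ| ^ m) * g ξ :=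
          mul_le_mul_of_nonneg_left hmono hπ.le
  calc (∫ y : ℝ, ψ y) / (4 * Real.pi) ≤ (uF m f (x - θ * t ^ κ) t).re := hfinal
    _ ≤ |(uF m f (x - θ * t ^ κ) t).re| := le_abs_self _
    _ ≤ ‖uF m f (x - θ * t ^ κ) t‖ := Complex.abs_re_le_norm _

lemma part2 (κ θ m : ℝ) (ψ : ℝ → ℝ) (hψc : Continuous ψ) (hψ0 : ∀ x : ℝ, 0 ≤ ψ x)
    (hsupp : Function.support ψ ⊆ Set.Icc (1/2 : ℝ) 2) (s : ℝ) :
    ∃ Cs > (0:ℝ), ∀ lam : ℝ, 1 < lam → ∀ f : ℝ → ℂ,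
      (∀ ξ : ℝ, FT f ξ =
          Complex.exp (Complex.I *
              (((2:ℝ) ^ (-κ) * θ * ξ - (1/2) * |ξ| ^ m : ℝ) : ℂ)) *
            ((lam⁻¹ * ψ (lam⁻¹ * ξ) : ℝ) : ℂ)) →
      HsNorm s f ≤ ENNReal.ofReal (Cs * lam ^ (s - 1/2)) := by
  have hψcs : HasCompactSupport ψ :=
    HasCompactSupport.intro isCompact_Icc fun x hx => by
      by_contra hne
      exact hx (hsupp (Function.mem_support.2 hne))
  obtain ⟨B, hB⟩ := hψc.bounded_above_of_compact_support hψcs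
  have hB1 : ∀ x, ψ x ≤ B + 1 := fun x => by
    have := hB x; rw [Real.norm_eq_abs, abs_of_nonneg (hψ0 x)] at this; linarith
  have hB0 : (0:ℝ) < B + 1 := by
    have := hB 0; have := norm_nonneg (ψ 0); linarith
  set X : ℝ := (3/2) * 5 ^ |s| * (B+1)^2 with hX
  have hX0 : 0 < X := by positivity
  refine ⟨X ^ (1/2 : ℝ), by positivity, ?_⟩
  intro lam hlam f hFT
  have hlam0 : (0:ℝ) < lam := by linarith
  have hnorm : ∀ ξ : ℝ, ‖FT f ξ‖ = lam⁻¹ * ψ (lam⁻¹ * ξ) := by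
    intro ξ
    rw [hFT ξ, norm_mul, aux_norm_exp_I, one_mul, Complex.norm_real, Real.norm_eq_abs,
      abs_of_nonneg (mul_nonneg (by positivity) (hψ0 _))]
  set D : ℝ≥0∞ := ENNReal.ofReal (5 ^ |s| * lam ^ (2*s) * ((lam⁻¹)^2 * (B+1)^2)) with hD
  have hbound : ∀ ξ : ℝ,
      ENNReal.ofReal ((1 + ξ ^ 2) ^ s) * (‖FT f ξ‖₊ : ℝ≥0∞) ^ 2
        ≤ (Set.Icc (lam/2) (2*lam)).indicator (fun _ => D) ξ := by
    intro ξ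
    have hcoe : (‖FT f ξ‖₊ : ℝ≥0∞) ^ 2 = ENNReal.ofReal (‖FT f ξ‖ ^ 2) := by
      rw [ENNReal.ofReal_pow (norm_nonneg _), ← coe_nnnorm, ENNReal.ofReal_coe_nnreal]
    rw [hcoe, ← ENNReal.ofReal_mul (by positivity)]
    by_cases hmem : ξ ∈ Set.Icc (lam/2) (2*lam)
    · rw [Set.indicator_of_mem hmem]
      apply ENNReal.ofReal_le_ofReal
      obtain ⟨h1, h2⟩ := Set.mem_Icc.1 hmem
      have hw := weight_bound (s := s) hlam h1 h2
      have hψb : ‖FT f ξ‖ ^ 2 ≤ (lam⁻¹)^2 * (B+1)^2 := by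
        rw [hnorm ξ, mul_pow]
        have : ψ (lam⁻¹ * ξ) ^ 2 ≤ (B+1)^2 := by
          have := hψ0 (lam⁻¹ * ξ); have := hB1 (lam⁻¹ * ξ); nlinarith
        have hinv2 : (0:ℝ) ≤ (lam⁻¹)^2 := by positivity
        nlinarith
      have hw0 : (0:ℝ) ≤ (1 + ξ^2) ^ s := by positivity
      have h2' : (0:ℝ) ≤ ‖FT f ξ‖ ^ 2 := by positivity
      exact mul_le_mul hw hψb h2' (by positivity)
    · have hz : ψ (lam⁻¹ * ξ) = 0 := by
        by_contra hne
        exact hmem (aux_mem hsupp hlam0 hne)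
      rw [Set.indicator_of_notMem hmem, hnorm ξ, hz, mul_zero]
      simp
  have hlint : (∫⁻ ξ : ℝ, ENNReal.ofReal ((1 + ξ ^ 2) ^ s) * (‖FT f ξ‖₊ : ℝ≥0∞) ^ 2)
      ≤ D * ENNReal.ofReal (2*lam - lam/2) := by
    calc (∫⁻ ξ : ℝ, ENNReal.ofReal ((1 + ξ ^ 2) ^ s) * (‖FT f ξ‖₊ : ℝ≥0∞) ^ 2)
        ≤ ∫⁻ ξ : ℝ, (Set.Icc (lam/2) (2*lam)).indicator (fun _ => D) ξ :=
          lintegral_mono hbound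
      _ = ∫⁻ _ in Set.Icc (lam/2) (2*lam), D := lintegral_indicator measurableSet_Icc _
      _ = D * volume (Set.Icc (lam/2) (2*lam)) := setLIntegral_const _ _
      _ = D * ENNReal.ofReal (2*lam - lam/2) := by rw [Real.volume_Icc]
  have hEeq : 5 ^ |s| * lam ^ (2*s) * ((lam⁻¹)^2 * (B+1)^2) * (2*lam - lam/2)
      = X * lam ^ (2*s - 1) := by
    rw [hX, Real.rpow_sub hlam0, Real.rpow_one]
    field_simp
    ring
  have hfinal : D * ENNReal.ofReal (2*lam - lam/2)
      = ENNReal.ofReal (X * lam ^ (2*s - 1)) := by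
    rw [hD, ← ENNReal.ofReal_mul (by positivity), hEeq]
  rw [HsNorm]
  calc (∫⁻ ξ : ℝ, ENNReal.ofReal ((1 + ξ ^ 2) ^ s) * (‖FT f ξ‖₊ : ℝ≥0∞) ^ 2) ^ (1/2 : ℝ)
      ≤ (ENNReal.ofReal (X * lam ^ (2*s - 1))) ^ (1/2 : ℝ) := by
        rw [← hfinal]; exact ENNReal.rpow_le_rpow hlint (by norm_num)
    _ = ENNReal.ofReal ((X * lam ^ (2*s - 1)) ^ (1/2 : ℝ)) :=
        ENNReal.ofReal_rpow_of_nonneg (by positivity) (by norm_num)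
    _ = ENNReal.ofReal (X ^ (1/2 : ℝ) * lam ^ (s - 1/2)) := by
        congr 1
        rw [Real.mul_rpow hX0.le (by positivity), ← Real.rpow_mul hlam0.le,
          show (2*s-1)*(1/2:ℝ) = s - 1/2 by ring]

/-- The sharpness example of Section 4: the data `f_λ` with
`f̂_λ(ξ) = e^{i(2^{−κ}θξ − (1/2)|ξ|^m)} λ^{−1} ψ(λ^{−1}ξ)` satisfies the lower bound
`‖ sup_t |u_{f_λ}(x − θt^κ, t)| ‖_{L^q(|x|^{α−1}dx on (0,1))} ≳ λ^{−mα/q}` together with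
`‖f_λ‖_{H^s} ≲ λ^{s−1/2}`. -/
theorem stmt12 (m κ θ α q : ℝ) (hm : 0 < m) (hm1 : m < 1) (hκ : 1 ≤ κ) (hθ : 0 < θ)
    (hα : 0 < α) (hα1 : α ≤ 1) (hq : 2 ≤ q)
    (ψ : ℝ → ℝ) (hψ : ContDiff ℝ (⊤ : ℕ∞) ψ) (hψ0 : ∀ x : ℝ, 0 ≤ ψ x)
    (hsupp : Function.support ψ ⊆ Set.Icc (1/2 : ℝ) 2) (hint : 0 < ∫ x : ℝ, ψ x) :
    (∃ c > 0, ∃ lam₀ > (1:ℝ), ∀ lam : ℝ, lam₀ ≤ lam → ∀ f : ℝ → ℂ,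
      (∀ ξ : ℝ, FT f ξ =
          Complex.exp (Complex.I *
              (((2:ℝ) ^ (-κ) * θ * ξ - (1/2) * |ξ| ^ m : ℝ) : ℂ)) *
            ((lam⁻¹ * ψ (lam⁻¹ * ξ) : ℝ) : ℂ)) →
      ENNReal.ofReal (c * lam ^ (-(m * α / q))) ≤
        (∫⁻ x in Set.Ioo (0:ℝ) 1,
            (⨆ t ∈ Set.Ioo (0:ℝ) 1, (‖uF m f (x - θ * t ^ κ) t‖₊ : ℝ≥0∞)) ^ q *
              ENNReal.ofReal (|x| ^ (α - 1))) ^ (1 / q)) ∧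
    ∀ s : ℝ, ∃ Cs > 0, ∀ lam : ℝ, 1 < lam → ∀ f : ℝ → ℂ,
      (∀ ξ : ℝ, FT f ξ =
          Complex.exp (Complex.I *
              (((2:ℝ) ^ (-κ) * θ * ξ - (1/2) * |ξ| ^ m : ℝ) : ℂ)) *
            ((lam⁻¹ * ψ (lam⁻¹ * ξ) : ℝ) : ℂ)) →
      HsNorm s f ≤ ENNReal.ofReal (Cs * lam ^ (s - 1/2)) := by
  have hψc : Continuous ψ := hψ.continuous
  constructor
  · -- Part 1
    set c₀ : ℝ := (∫ y : ℝ, ψ y) / (4 * Real.pi) with hc₀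
    have hc₀0 : 0 < c₀ := div_pos hint (by positivity)
    set δ : ℝ := min (θ * 2 ^ (1-κ-m)) (min 1 (θ/4)) with hδ
    have hδ0 : 0 < δ := by
      apply lt_min (by positivity)
      exact lt_min one_pos (by positivity)
    have hδ1 : δ ≤ 1 := le_trans (min_le_right _ _) (min_le_left _ _)
    have hδθ4 : δ ≤ θ/4 := le_trans (min_le_right _ _) (min_le_right _ _)
    have hq0 : (0:ℝ) < q := by linarith
    refine ⟨c₀ * (δ ^ α / α) ^ (1/q), by positivity, 2, one_lt_two, ?_⟩
    intro lam hlam2 f hFT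
    have hlam : (1:ℝ) < lam := by linarith
    have hlam0 : (0:ℝ) < lam := by linarith
    set r : ℝ := δ * lam ^ (-m) with hr
    have hlm1 : lam ^ (-m) ≤ 1 :=
      Real.rpow_le_one_of_one_le_of_nonpos hlam.le (by linarith)
    have hlm0 : (0:ℝ) < lam ^ (-m) := Real.rpow_pos_of_pos hlam0 _
    have hr0 : 0 < r := by positivity
    have hrδ : r ≤ δ := by
      calc r = δ * lam ^ (-m) := rfl
        _ ≤ δ * 1 := by gcongr
        _ = δ := mul_one δ
    have hr1 : r ≤ 1 := hrδ.trans hδ1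
    -- pointwise bound on (0, r)
    have key : ∀ x ∈ Set.Ioo (0:ℝ) r,
        ENNReal.ofReal (c₀ ^ q * x ^ (α-1)) ≤
          (⨆ t ∈ Set.Ioo (0:ℝ) 1, (‖uF m f (x - θ * t ^ κ) t‖₊ : ℝ≥0∞)) ^ q *
            ENNReal.ofReal (|x| ^ (α - 1)) := by
      intro x hx
      have hx0 : 0 < x := hx.1
      have hxr : x < r := hx.2
      have hxθ : x < θ/4 := lt_of_lt_of_le hxr (hrδ.trans hδθ4)
      have hδle : δ ≤ θ * 2 ^ (1-κ-m) := min_le_left _ _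
      have h2m : ((2:ℝ) * lam) ^ m = 2 ^ m * lam ^ m :=
        Real.mul_rpow (by norm_num) hlam0.le
      have hll : lam ^ (-m) * lam ^ m = 1 := by
        rw [← Real.rpow_add hlam0]; simp
      have h2e : (2:ℝ) ^ (1-κ-m) * 2 ^ m * 2 ^ (κ-1) = 1 := by
        rw [← Real.rpow_add two_pos, ← Real.rpow_add two_pos]
        norm_num
      have hxτ : 2 ^ (κ-1) * (x/θ) * ((2:ℝ) * lam) ^ m ≤ 1 := by
        rw [h2m]
        have hstep : x * (2 ^ m * lam ^ m) * 2 ^ (κ-1) ≤ θ := by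
          calc x * (2 ^ m * lam ^ m) * 2 ^ (κ-1)
              ≤ (δ * lam ^ (-m)) * (2 ^ m * lam ^ m) * 2 ^ (κ-1) := by
                have h1 : (0:ℝ) ≤ 2 ^ m * lam ^ m := by positivity
                have h2 : (0:ℝ) ≤ (2:ℝ) ^ (κ-1) := by positivity
                gcongr
            _ = δ * (2 ^ m * 2 ^ (κ-1)) * (lam ^ (-m) * lam ^ m) := by ring
            _ = δ * (2 ^ m * 2 ^ (κ-1)) := by rw [hll, mul_one]
            _ ≤ (θ * 2 ^ (1-κ-m)) * (2 ^ m * 2 ^ (κ-1)) := by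
                have h3 : (0:ℝ) ≤ 2 ^ m * 2 ^ (κ-1) := by positivity
                exact mul_le_mul_of_nonneg_right hδle h3
            _ = θ * ((2:ℝ) ^ (1-κ-m) * 2 ^ m * 2 ^ (κ-1)) := by ring
            _ = θ := by rw [h2e, mul_one]
        calc 2 ^ (κ-1) * (x/θ) * (2 ^ m * lam ^ m)
            = (x * (2 ^ m * lam ^ m) * 2 ^ (κ-1)) / θ := by ring
          _ ≤ 1 := (div_le_one hθ).2 hstep
      obtain ⟨t, htIoo, hc₀le⟩ :=
        core m κ θ hm hκ hθ ψ hψc hψ0 hsupp lam hlam f hFT x hx0 hxθ hxτ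
      have hsup : ENNReal.ofReal c₀ ≤
          ⨆ t ∈ Set.Ioo (0:ℝ) 1, (‖uF m f (x - θ * t ^ κ) t‖₊ : ℝ≥0∞) := by
        refine le_trans ?_ (le_iSup₂
          (f := fun t (_ : t ∈ Set.Ioo (0:ℝ) 1) => (‖uF m f (x - θ * t ^ κ) t‖₊ : ℝ≥0∞))
          t htIoo)
        rw [← ENNReal.ofReal_coe_nnreal, coe_nnnorm]
        exact ENNReal.ofReal_le_ofReal hc₀le
      have h1 : ENNReal.ofReal (c₀ ^ q) ≤
          (⨆ t ∈ Set.Ioo (0:ℝ) 1, (‖uF m f (x - θ * t ^ κ) t‖₊ : ℝ≥0∞)) ^ q := by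
        rw [← ENNReal.ofReal_rpow_of_nonneg hc₀0.le hq0.le]
        exact ENNReal.rpow_le_rpow hsup hq0.le
      rw [abs_of_pos hx0]
      calc ENNReal.ofReal (c₀ ^ q * x ^ (α-1))
          = ENNReal.ofReal (c₀ ^ q) * ENNReal.ofReal (x ^ (α-1)) :=
            ENNReal.ofReal_mul (by positivity)
        _ ≤ (⨆ t ∈ Set.Ioo (0:ℝ) 1, (‖uF m f (x - θ * t ^ κ) t‖₊ : ℝ≥0∞)) ^ q *
              ENNReal.ofReal (x ^ (α-1)) := mul_le_mul_left h1 _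
    -- reduce to an explicit integral
    have hInt : IntegrableOn (fun x : ℝ => c₀ ^ q * x ^ (α-1)) (Set.Ioo 0 r) := by
      have h := (intervalIntegral.intervalIntegrable_rpow'
        (by linarith : (-1:ℝ) < α - 1) (a := 0) (b := r))
      rw [intervalIntegrable_iff_integrableOn_Ioc_of_le hr0.le] at h
      exact (h.mono_set Set.Ioo_subset_Ioc_self).const_mul _
    have hval : ∫ x in Set.Ioo (0:ℝ) r, c₀ ^ q * x ^ (α-1) = c₀ ^ q * (r ^ α / α) := by
      rw [← integral_Ioc_eq_integral_Ioo, ← intervalIntegral.integral_of_le hr0.le,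
        intervalIntegral.integral_const_mul, integral_rpow (Or.inl (by linarith))]
      rw [show α - 1 + 1 = α by ring, Real.zero_rpow hα.ne']
      ring
    have hlow : ENNReal.ofReal (c₀ ^ q * (r ^ α / α)) ≤
        ∫⁻ x in Set.Ioo (0:ℝ) 1,
          (⨆ t ∈ Set.Ioo (0:ℝ) 1, (‖uF m f (x - θ * t ^ κ) t‖₊ : ℝ≥0∞)) ^ q *
            ENNReal.ofReal (|x| ^ (α - 1)) := by
      rw [← hval, ofReal_integral_eq_lintegral_ofReal hInt
        ((ae_restrict_iff' measurableSet_Ioo).2 (ae_of_all _ fun x hx => by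
          have := hx.1; positivity))]
      calc ∫⁻ x in Set.Ioo (0:ℝ) r, ENNReal.ofReal (c₀ ^ q * x ^ (α-1))
          ≤ ∫⁻ x in Set.Ioo (0:ℝ) r,
              (⨆ t ∈ Set.Ioo (0:ℝ) 1, (‖uF m f (x - θ * t ^ κ) t‖₊ : ℝ≥0∞)) ^ q *
                ENNReal.ofReal (|x| ^ (α - 1)) :=
            lintegral_mono_ae ((ae_restrict_iff' measurableSet_Ioo).2 (ae_of_all _ key))
        _ ≤ _ := lintegral_mono_set (Set.Ioo_subset_Ioo le_rfl hr1)
    -- final real computation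
    have hrα : r ^ α = δ ^ α * lam ^ (-(m * α)) := by
      rw [hr, Real.mul_rpow hδ0.le hlm0.le, ← Real.rpow_mul hlam0.le]
      ring_nf
    have hc : (c₀ ^ q * (r ^ α / α)) ^ (1/q)
        = c₀ * (δ ^ α / α) ^ (1/q) * lam ^ (-(m * α / q)) := by
      rw [hrα]
      have e1 : c₀ ^ q * (δ ^ α * lam ^ (-(m * α)) / α)
          = (c₀ ^ q) * ((δ ^ α / α) * lam ^ (-(m * α))) := by ring
      rw [e1, Real.mul_rpow (by positivity) (by positivity),
        Real.mul_rpow (by positivity) (by positivity),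
        ← Real.rpow_mul hc₀0.le, mul_one_div, div_self hq0.ne', Real.rpow_one,
        ← Real.rpow_mul hlam0.le]
      rw [show -(m * α) * (1/q) = -(m * α / q) by ring]
      ring
    calc ENNReal.ofReal (c₀ * (δ ^ α / α) ^ (1/q) * lam ^ (-(m * α / q)))
        = (ENNReal.ofReal (c₀ ^ q * (r ^ α / α))) ^ (1/q) := by
          rw [ENNReal.ofReal_rpow_of_nonneg (by positivity) (by positivity), hc]
      _ ≤ _ := ENNReal.rpow_le_rpow hlow (by positivity)
  · -- Part 2
    intro s
    obtain ⟨Cs, hCs0, hCs⟩ := part2 κ θ m ψ hψc hψ0 hsupp s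
    exact ⟨Cs, hCs0, hCs⟩
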